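/- Fix nonzero complex numbers z_1,…,z_k, set t_l = z_l·conj(z_l) and T = t_1/ζ_{c_1}+⋯+t_k/ζ_{c_k}, and define χ_n : G≀S(n) → ℂ by χ_n(x) = (1/(|G|^n·(T)_n))·Σ_{y∈G≀S(n)} ∏_{l=1}^k z_l^{[x·y]_{c_l}}·conj(z_l)^{[y]_{c_l}}. Then the functions χ_n are consistent: for every n ≥ 1 and every x ∈ G≀S(n), χ_{n+1}(ι(x)) = χ_n(x), where ι is the embedding of G≀S(n) into G≀S(n+1). (Hence the χ_n are the restrictions to the subgroups G≀S(n) of a single function on G≀S(∞), the character χ_{z_1,…,z_k} of the generalized regular representation T_{z_1,…,z_k}.) -/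

import Mathlib

namespace WreathPaper

/-- The permutation action of `S(n)` on `G^n`. -/
def permAut (G : Type*) [Group G] (n : ℕ) : Equiv.Perm (Fin n) →* MulAut (Fin n → G) where
  toFun s :=
    { toFun := fun g => g ∘ s.symm
      invFun := fun g => g ∘ s
      left_inv := fun g => funext fun i => by simp
      right_inv := fun g => funext fun i => by simp
      map_mul' := fun g h => rfl }
  map_one' := by ext g i; rfl
  map_mul' := fun s t => by ext g i; rfl

/-- The wreath product `G ≀ S(n)`: underlying set `G^n × S(n)` with
`((g₁,…,gₙ),s)·((h₁,…,hₙ),t) = ((g₁h_{s⁻¹(1)},…,g_nh_{s⁻¹(n)}), st)`. -/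
abbrev WP (G : Type*) [Group G] (n : ℕ) :=
  SemidirectProduct (Fin n → G) (Equiv.Perm (Fin n)) (permAut G n)

namespace WP

variable {G : Type*} [Group G] {n : ℕ}

def wpEquivProd (G : Type*) [Group G] (n : ℕ) :
    WP G n ≃ (Fin n → G) × Equiv.Perm (Fin n) where
  toFun x := (x.left, x.right)
  invFun p := ⟨p.1, p.2⟩
  left_inv x := rfl
  right_inv p := rfl

instance [Fintype G] : Fintype (WP G n) := Fintype.ofEquiv _ (wpEquivProd G n).symm
instance [DecidableEq G] : DecidableEq (WP G n) := (wpEquivProd G n).decidableEq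

/-- The cycle-product of `x = ((g₁,…,gₙ),s)` corresponding to the cycle of `s`
containing `i` (computed starting at `i`): `g_{s^{r-1}(i)} ⋯ g_{s(i)} g_i`. -/
noncomputable def cycleProd (x : WP G n) (i : Fin n) : G :=
  (((List.range (Function.minimalPeriod (⇑x.right) i)).reverse).map
    fun j => x.left ((x.right ^ j) i)).prod

/-- `[x]_c`: the number of cycles of `x` whose cycle-product lies in `c`
(cycles are counted via their minimal representative). -/
noncomputable def cycleCount (x : WP G n) (c : Set G) : ℕ :=
  Nat.card {i : Fin n // (∀ m : ℕ, i ≤ (x.right ^ m) i) ∧ cycleProd x i ∈ c}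

/-- The number of cycles of `x` of length `j` whose cycle-product lies in `c`. -/
noncomputable def cycleCountLen (x : WP G n) (c : Set G) (j : ℕ) : ℕ :=
  Nat.card {i : Fin n // (∀ m : ℕ, i ≤ (x.right ^ m) i) ∧
    Function.minimalPeriod (⇑x.right) i = j ∧ cycleProd x i ∈ c}

/-- Removing the point `n+1` from a permutation of `{1,…,n+1}`. -/
def projPerm (s : Equiv.Perm (Fin (n + 1))) : Equiv.Perm (Fin n) :=
  Equiv.removeNone (finSuccEquivLast.symm.trans (s.trans finSuccEquivLast))

/-- The canonical projection `p_{n,n+1} : G ≀ S(n+1) → G ≀ S(n)`. -/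
def proj (x : WP G (n + 1)) : WP G n :=
  ⟨fun i => if x.right (Fin.last n) = Fin.castSucc i
      then x.left (Fin.castSucc i) * x.left (Fin.last n)
      else x.left (Fin.castSucc i),
    projPerm x.right⟩

def castEquiv {m n : ℕ} (h : m ≤ n) : Fin m ≃ {i : Fin n // (i : ℕ) < m} where
  toFun i := ⟨⟨(i : ℕ), lt_of_lt_of_le i.isLt h⟩, i.isLt⟩
  invFun i := ⟨(i.1 : ℕ), i.2⟩
  left_inv i := rfl
  right_inv i := rfl

/-- The canonical embedding `ι_{m,n} : G ≀ S(m) → G ≀ S(n)` for `m ≤ n`. -/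
def emb {m n : ℕ} (h : m ≤ n) (x : WP G m) : WP G n :=
  ⟨fun i => if hi : (i : ℕ) < m then x.left ⟨(i : ℕ), hi⟩ else 1,
    x.right.extendDomain (castEquiv h)⟩

end WP

/-- `c` is a conjugacy class of `G`. -/
def IsConjClass {G : Type*} [Group G] (c : Set G) : Prop :=
  ∃ g : G, c = {h | IsConj g h}

end WreathPaper

namespace WreathPaper

/-- `T = t₁/ζ_{c₁} + ⋯ + t_k/ζ_{c_k}` where `ζ_{c_l} = |G|/|c_l|`. -/
noncomputable def ewensT {G : Type*} [Group G] [Fintype G] {k : ℕ}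
    (t : Fin k → ℝ) (c : Fin k → Set G) : ℝ :=
  ∑ l, t l * (Nat.card (c l) : ℝ) / (Fintype.card G : ℝ)

/-- The Ewens probability distribution on `G ≀ S(n)`:
`P(x) = t₁^{[x]_{c₁}} ⋯ t_k^{[x]_{c_k}} / (|G|ⁿ (T)ₙ)`. -/
noncomputable def ewensP {G : Type*} [Group G] [Fintype G] {k n : ℕ}
    (t : Fin k → ℝ) (c : Fin k → Set G) (x : WP G n) : ℝ :=
  (∏ l, t l ^ WP.cycleCount x (c l)) /
    ((Fintype.card G : ℝ) ^ n * (ascPochhammer ℝ n).eval (ewensT t c))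

end WreathPaper

namespace WreathPaper

/-- The restriction to `G ≀ S(n)` of the character `χ_{z₁,…,z_k}` of the generalized
regular representation `T_{z₁,…,z_k}`:
`χₙ(x) = (1/(|G|ⁿ(T)ₙ)) Σ_{y∈G≀S(n)} ∏_l z_l^{[xy]_{c_l}} conj(z_l)^{[y]_{c_l}}`. -/
noncomputable def chiRes {G : Type*} [Group G] [Fintype G] {k : ℕ}
    (z : Fin k → ℂ) (c : Fin k → Set G) (n : ℕ) (x : WP G n) : ℂ :=
  (1 / ((Fintype.card G : ℂ) ^ n *
      Complex.ofReal ((ascPochhammer ℝ n).eval (ewensT (fun l => Complex.normSq (z l)) c)))) *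
    ∑ y : WP G n, ∏ l,
      z l ^ WP.cycleCount (x * y) (c l) *
        (starRingEnd ℂ) (z l) ^ WP.cycleCount y (c l)


namespace WP

open Function

variable {G : Type*} [Group G] {n : ℕ}

/-- Extend a permutation of `Fin n` to `Fin (n+1)` fixing the last point. -/
def pext (s : Equiv.Perm (Fin n)) : Equiv.Perm (Fin (n + 1)) :=
  s.extendDomain (castEquiv (Nat.le_succ n))

@[simp] lemma pext_castSucc (s : Equiv.Perm (Fin n)) (i : Fin n) :
    pext s i.castSucc = (s i).castSucc := by
  have h1 : (i.castSucc : Fin (n + 1)) = ((castEquiv (Nat.le_succ n)) i : Fin (n + 1)) := rfl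
  have h2 : ((s i).castSucc : Fin (n + 1)) = ((castEquiv (Nat.le_succ n)) (s i) : Fin (n + 1)) := rfl
  rw [h1, h2]
  exact Equiv.Perm.extendDomain_apply_image s _ i

@[simp] lemma pext_last (s : Equiv.Perm (Fin n)) : pext s (Fin.last n) = Fin.last n :=
  Equiv.Perm.extendDomain_apply_not_subtype _ _ (by simp)

lemma pext_mul (s t : Equiv.Perm (Fin n)) : pext (s * t) = pext s * pext t :=
  map_mul (Equiv.Perm.extendDomainHom (castEquiv (Nat.le_succ n))) s t

lemma pext_pow (s : Equiv.Perm (Fin n)) (m : ℕ) : pext (s ^ m) = pext s ^ m :=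
  map_pow (Equiv.Perm.extendDomainHom (castEquiv (Nat.le_succ n))) s m

@[simp] lemma pow_pext_castSucc (s : Equiv.Perm (Fin n)) (m : ℕ) (i : Fin n) :
    (pext s ^ m) i.castSucc = ((s ^ m) i).castSucc := by
  rw [← pext_pow]; exact pext_castSucc _ i

@[simp] lemma pow_pext_last (s : Equiv.Perm (Fin n)) (m : ℕ) :
    (pext s ^ m) (Fin.last n) = Fin.last n := by
  rw [← pext_pow]; exact pext_last _

/-- Insertion map: the inverse of the fibration `G≀S(n+1) → G≀S(n) × G × Fin (n+1)`. -/
def ins (w : WP G n) (g : G) (a : Fin (n + 1)) : WP G (n + 1) :=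
  ⟨fun i => if h : i = Fin.last n then g
      else w.left (i.castPred h) * (if pext w.right a = i then g⁻¹ else 1),
    pext w.right * Equiv.swap a (Fin.last n)⟩

@[simp] lemma ins_right (w : WP G n) (g : G) (a : Fin (n + 1)) :
    (ins w g a).right = pext w.right * Equiv.swap a (Fin.last n) := rfl

@[simp] lemma ins_left_last (w : WP G n) (g : G) (a : Fin (n + 1)) :
    (ins w g a).left (Fin.last n) = g := by
  simp [ins]

lemma ins_left_castSucc (w : WP G n) (g : G) (a : Fin (n + 1)) (i : Fin n) :
    (ins w g a).left i.castSucc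
      = w.left i * (if pext w.right a = i.castSucc then g⁻¹ else 1) := by
  have h : (i.castSucc : Fin (n+1)) ≠ Fin.last n := (Fin.castSucc_lt_last i).ne
  simp [ins, h]

lemma minimalPeriod_eq_of_iff {α β : Type*} {f : α → α} {g : β → β} {x : α} {y : β}
    (h : ∀ m, IsPeriodicPt f m x ↔ IsPeriodicPt g m y) :
    minimalPeriod f x = minimalPeriod g y :=
  Nat.dvd_antisymm
    (IsPeriodicPt.minimalPeriod_dvd ((h _).mpr (isPeriodicPt_minimalPeriod _ _)))
    (IsPeriodicPt.minimalPeriod_dvd ((h _).mp (isPeriodicPt_minimalPeriod _ _)))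

open scoped Classical in
lemma natCard_fin_succ (P : Fin (n + 1) → Prop) :
    Nat.card {i : Fin (n + 1) // P i}
      = Nat.card {i : Fin n // P i.castSucc} + (if P (Fin.last n) then 1 else 0) := by
  classical
  simp only [Nat.card_eq_fintype_card, Fintype.card_subtype, Finset.card_filter]
  rw [Fin.sum_univ_castSucc]

lemma perm_minimalPeriod_pos (s : Equiv.Perm (Fin n)) (j : Fin n) :
    0 < minimalPeriod (⇑s) j := by
  refine IsPeriodicPt.minimalPeriod_pos (orderOf_pos s) ?_
  show (⇑s)^[orderOf s] j = j
  rw [Equiv.Perm.iterate_eq_pow, pow_orderOf_eq_one]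
  rfl

lemma perm_pow_minimalPeriod (s : Equiv.Perm (Fin n)) (j : Fin n) :
    (s ^ minimalPeriod (⇑s) j) j = j :=
  isPeriodicPt_minimalPeriod (⇑s) j

lemma perm_pow_distinct (s : Equiv.Perm (Fin n)) (j : Fin n) {p p' : ℕ}
    (hp : p < minimalPeriod (⇑s) j) (hp' : p' < minimalPeriod (⇑s) j)
    (h : (s ^ p) j = (s ^ p') j) : p = p' := by
  wlog hle : p ≤ p' generalizing p p'
  · exact (this hp' hp h.symm (le_of_not_ge hle)).symm
  have h2 : (s ^ (p' - p)) j = j := by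
    have hcomp : (s ^ p) ((s ^ (p' - p)) j) = (s ^ p) j := by
      rw [← Equiv.Perm.mul_apply, ← pow_add, Nat.add_sub_cancel' hle, h]
    exact (s ^ p).injective hcomp
  have hdvd : minimalPeriod (⇑s) j ∣ p' - p :=
    IsPeriodicPt.minimalPeriod_dvd (show IsPeriodicPt (⇑s) (p' - p) j from h2)
  rcases Nat.eq_zero_or_pos (p' - p) with h0 | h0
  · omega
  · have := Nat.le_of_dvd h0 hdvd; omega

lemma revProd_add (f : ℕ → G) (A B : ℕ) :
    ((List.range (A + B)).reverse.map f).prod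
      = ((List.range B).reverse.map fun u => f (A + u)).prod
        * ((List.range A).reverse.map f).prod := by
  rw [List.range_add, List.reverse_append, List.map_append, List.prod_append]
  congr 2
  rw [List.map_reverse, List.map_reverse, List.map_map]
  rfl

lemma revProd_split (f : ℕ → G) (A P : ℕ) (h : A ≤ P) :
    ((List.range P).reverse.map f).prod
      = ((List.range (P - A)).reverse.map fun u => f (A + u)).prod
        * ((List.range A).reverse.map f).prod := by
  conv_lhs => rw [show P = A + (P - A) from by omega]
  exact revProd_add f A (P - A)

lemma revProd_congr {f f' : ℕ → G} {P : ℕ} (h : ∀ m < P, f m = f' m) :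
    ((List.range P).reverse.map f).prod = ((List.range P).reverse.map f').prod := by
  congr 1
  refine List.map_congr_left fun m hm => h m ?_
  rw [List.mem_reverse, List.mem_range] at hm
  exact hm

lemma insA_facts (w : WP G n) (g : G) :
    (ins w g (Fin.last n)).right = pext w.right := by
  rw [ins_right, Equiv.swap_self]
  exact mul_one _

open scoped Classical in
lemma insA_count (w : WP G n) (g : G) (c : Set G) :
    cycleCount (ins w g (Fin.last n)) c = cycleCount w c + (if g ∈ c then 1 else 0) := by
  set y := ins w g (Fin.last n) with hy
  have hyr : y.right = pext w.right := insA_facts w g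
  have hpow_cs : ∀ (m : ℕ) (i : Fin n),
      (y.right ^ m) i.castSucc = ((w.right ^ m) i).castSucc := by
    intro m i; rw [hyr, pow_pext_castSucc]
  have hpow_last : ∀ m : ℕ, (y.right ^ m) (Fin.last n) = Fin.last n := by
    intro m; rw [hyr, pow_pext_last]
  have hper : ∀ i : Fin n,
      minimalPeriod (⇑y.right) i.castSucc = minimalPeriod (⇑w.right) i := by
    intro i
    refine minimalPeriod_eq_of_iff fun m => ?_
    show (⇑y.right)^[m] i.castSucc = i.castSucc ↔ (⇑w.right)^[m] i = i
    rw [Equiv.Perm.iterate_eq_pow, Equiv.Perm.iterate_eq_pow, hpow_cs, Fin.castSucc_inj]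
  have hprod_cs : ∀ i : Fin n, cycleProd y i.castSucc = cycleProd w i := by
    intro i
    unfold cycleProd
    rw [hper]
    congr 1
    refine List.map_congr_left fun m _ => ?_
    rw [hpow_cs, ins_left_castSucc, pext_last]
    rw [if_neg (Fin.castSucc_lt_last _).ne', mul_one]
  have hmin_cs : ∀ i : Fin n,
      (∀ m : ℕ, i.castSucc ≤ (y.right ^ m) i.castSucc) ↔ ∀ m : ℕ, i ≤ (w.right ^ m) i := by
    intro i
    constructor
    · intro h m; have := h m; rwa [hpow_cs, Fin.castSucc_le_castSucc_iff] at this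
    · intro h m; rw [hpow_cs, Fin.castSucc_le_castSucc_iff]; exact h m
  have hmin_last : ∀ m : ℕ, Fin.last n ≤ (y.right ^ m) (Fin.last n) := fun m =>
    le_of_eq (hpow_last m).symm
  have hper_last : minimalPeriod (⇑y.right) (Fin.last n) = 1 :=
    minimalPeriod_eq_one_iff_isFixedPt.mpr
      (show y.right (Fin.last n) = Fin.last n by
        have := hpow_last 1; rwa [pow_one] at this)
  have hprod_last : cycleProd y (Fin.last n) = g := by
    unfold cycleProd
    rw [hper_last]
    simp [hy]
  unfold cycleCount
  rw [natCard_fin_succ]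
  congr 1
  · exact Nat.card_congr (Equiv.subtypeEquivRight fun i => by rw [hmin_cs, hprod_cs])
  · have : ((∀ m : ℕ, Fin.last n ≤ (y.right ^ m) (Fin.last n)) ∧
        cycleProd y (Fin.last n) ∈ c) ↔ g ∈ c := by
      rw [hprod_last]
      exact ⟨fun h => h.2, fun h => ⟨hmin_last, h⟩⟩
    simp only [this]

open scoped Classical in
lemma insB_count (w : WP G n) (g : G) (b : Fin n) (c : Set G)
    (hc : ∀ u v : G, IsConj u v → u ∈ c → v ∈ c) :
    cycleCount (ins w g b.castSucc) c = cycleCount w c := by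
  set s := w.right with hs
  set y := ins w g b.castSucc with hy
  set t := y.right with ht
  have htdef : t = pext s * Equiv.swap b.castSucc (Fin.last n) := rfl
  have hT1 : ∀ i : Fin n, i ≠ b → t i.castSucc = (s i).castSucc := by
    intro i hib
    rw [htdef, Equiv.Perm.mul_apply,
      Equiv.swap_apply_of_ne_of_ne (by simpa using hib) (Fin.castSucc_lt_last i).ne,
      pext_castSucc]
  have hT2 : t b.castSucc = Fin.last n := by
    rw [htdef, Equiv.Perm.mul_apply, Equiv.swap_apply_left, pext_last]
  have hT3 : t (Fin.last n) = (s b).castSucc := by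
    rw [htdef, Equiv.Perm.mul_apply, Equiv.swap_apply_right, pext_castSucc]
  have hL : ∀ i : Fin n, y.left i.castSucc = w.left i * (if s b = i then g⁻¹ else 1) := by
    intro i
    rw [hy, ins_left_castSucc]
    simp only [pext_castSucc, Fin.castSucc_inj, hs]
  have hLlast : y.left (Fin.last n) = g := by rw [hy]; exact ins_left_last w g _
  -- the last point is never a minimal cycle representative
  have hlastfail : ¬ ∀ m : ℕ, Fin.last n ≤ (t ^ m) (Fin.last n) := by
    intro hcon
    have hPl : 0 < minimalPeriod (⇑t) (Fin.last n) := perm_minimalPeriod_pos t _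
    set P := minimalPeriod (⇑t) (Fin.last n) with hP
    have hfix : (t ^ P) (Fin.last n) = Fin.last n := perm_pow_minimalPeriod t _
    have h2 : (t ^ (P - 1)) (Fin.last n) = b.castSucc := by
      apply t.injective
      have h3 : t ((t ^ (P - 1)) (Fin.last n)) = (t ^ P) (Fin.last n) := by
        rw [← Equiv.Perm.mul_apply, ← pow_succ', show P - 1 + 1 = P from by omega]
      rw [h3, hfix, hT2]
    have := hcon (P - 1)
    rw [h2] at this
    exact absurd this (not_le.mpr (Fin.castSucc_lt_last b))
  unfold cycleCount
  simp only [← ht, ← hs]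
  rw [natCard_fin_succ, if_neg (fun hcc => hlastfail (And.left hcc)), add_zero]
  refine Nat.card_congr (Equiv.subtypeEquivRight fun j => ?_)
  set r := minimalPeriod (⇑s) j with hrdef
  have hr : 0 < r := perm_minimalPeriod_pos s j
  have hsr : (s ^ r) j = j := perm_pow_minimalPeriod s j
  by_cases hb : ∃ p : ℕ, (s ^ p) j = b
  · -- b lies on the cycle of j
    set q := Nat.find hb with hqdef
    have hq : (s ^ q) j = b := Nat.find_spec hb
    have hqmin : ∀ p < q, (s ^ p) j ≠ b := fun p hp => Nat.find_min hb hp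
    have hqr : q < r := by
      have h1 : (s ^ (q % r)) j = b := by
        have h2 : (⇑s)^[q % r] j = (⇑s)^[q] j := iterate_mod_minimalPeriod_eq
        rw [Equiv.Perm.iterate_eq_pow, Equiv.Perm.iterate_eq_pow] at h2
        rw [h2, hq]
      have h3 : q ≤ q % r := Nat.find_min' hb h1
      have h4 : q % r < r := Nat.mod_lt _ hr
      omega
    have hB1 : ∀ m ≤ q, (t ^ m) j.castSucc = ((s ^ m) j).castSucc := by
      intro m
      induction m with
      | zero => intro _; simp
      | succ m ih =>
        intro hm
        rw [pow_succ', pow_succ', Equiv.Perm.mul_apply, Equiv.Perm.mul_apply,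
          ih (by omega), hT1 _ (hqmin m (by omega))]
    have hB2 : (t ^ (q + 1)) j.castSucc = Fin.last n := by
      rw [pow_succ', Equiv.Perm.mul_apply, hB1 q le_rfl, hq, hT2]
    have hB3 : ∀ u, 1 ≤ u → q + u ≤ r →
        (t ^ (q + 1 + u)) j.castSucc = ((s ^ (q + u)) j).castSucc := by
      intro u
      induction u with
      | zero => omega
      | succ u ih =>
        intro _ hu
        rcases Nat.eq_zero_or_pos u with hu0 | hu0
        · subst hu0
          rw [show q + 1 + 1 = (q + 1) + 1 from rfl, pow_succ', Equiv.Perm.mul_apply, hB2, hT3,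
            show q + 0 + 1 = q + 1 from rfl, ← hq, ← Equiv.Perm.mul_apply, ← pow_succ']
        · have hne : (s ^ (q + u)) j ≠ b := by
            intro hcon
            have := perm_pow_distinct s j (show q + u < r by omega) hqr (hcon.trans hq.symm)
            omega
          rw [show q + 1 + (u + 1) = (q + 1 + u) + 1 from rfl, pow_succ', Equiv.Perm.mul_apply,
            ih hu0 (by omega), hT1 _ hne,
            show q + (u + 1) = (q + u) + 1 from rfl, pow_succ', Equiv.Perm.mul_apply]
    have hval : ∀ m ≤ r + 1, (t ^ m) j.castSucc =
        if m ≤ q then ((s ^ m) j).castSucc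
        else if m = q + 1 then Fin.last n
        else ((s ^ (m - 1)) j).castSucc := by
      intro m hm
      by_cases h1 : m ≤ q
      · rw [if_pos h1]; exact hB1 m h1
      · rw [if_neg h1]
        by_cases h2 : m = q + 1
        · rw [if_pos h2, h2]; exact hB2
        · rw [if_neg h2]
          have h3 := hB3 (m - q - 1) (by omega) (by omega)
          rw [show q + 1 + (m - q - 1) = m from by omega] at h3
          rw [h3, show q + (m - q - 1) = m - 1 from by omega]
    have hperiod : minimalPeriod (⇑t) j.castSucc = r + 1 := by
      have hperpt : IsPeriodicPt (⇑t) (r + 1) j.castSucc := by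
        show (⇑t)^[r + 1] j.castSucc = j.castSucc
        rw [Equiv.Perm.iterate_eq_pow, hval (r + 1) le_rfl, if_neg (by omega), if_neg (by omega),
          show r + 1 - 1 = r from by omega, hsr]
      have hdvd : minimalPeriod (⇑t) j.castSucc ∣ r + 1 := hperpt.minimalPeriod_dvd
      have hpos : 0 < minimalPeriod (⇑t) j.castSucc := hperpt.minimalPeriod_pos (by omega)
      have hle : minimalPeriod (⇑t) j.castSucc ≤ r + 1 := Nat.le_of_dvd (by omega) hdvd
      by_contra hne
      have hP0r : minimalPeriod (⇑t) j.castSucc ≤ r := by omega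
      have hfix : (t ^ minimalPeriod (⇑t) j.castSucc) j.castSucc = j.castSucc :=
        isPeriodicPt_minimalPeriod (⇑t) j.castSucc
      set P0 := minimalPeriod (⇑t) j.castSucc with hP0
      rw [hval P0 (by omega)] at hfix
      by_cases hc1 : P0 ≤ q
      · rw [if_pos hc1] at hfix
        have h5 : (s ^ P0) j = j := Fin.castSucc_inj.mp hfix
        have h6 : r ∣ P0 := IsPeriodicPt.minimalPeriod_dvd
          (show IsPeriodicPt (⇑s) P0 j from h5)
        have := Nat.le_of_dvd (by omega) h6
        omega
      · rw [if_neg hc1] at hfix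
        by_cases hc2 : P0 = q + 1
        · rw [if_pos hc2] at hfix
          exact absurd hfix.symm (Fin.castSucc_lt_last j).ne
        · rw [if_neg hc2] at hfix
          have h5 : (s ^ (P0 - 1)) j = j := Fin.castSucc_inj.mp hfix
          have h6 : r ∣ P0 - 1 := IsPeriodicPt.minimalPeriod_dvd
            (show IsPeriodicPt (⇑s) (P0 - 1) j from h5)
          have := Nat.le_of_dvd (show 0 < P0 - 1 by omega) h6
          omega
    have hmin : (∀ m : ℕ, j.castSucc ≤ (t ^ m) j.castSucc) ↔ ∀ m : ℕ, j ≤ (s ^ m) j := by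
      constructor
      · intro h m
        have hmod : (s ^ (m % r)) j = (s ^ m) j := by
          have h2 : (⇑s)^[m % r] j = (⇑s)^[m] j := iterate_mod_minimalPeriod_eq
          rwa [Equiv.Perm.iterate_eq_pow, Equiv.Perm.iterate_eq_pow] at h2
        rw [← hmod]
        set p := m % r with hpdef
        have hp : p < r := Nat.mod_lt _ hr
        by_cases hpq : p ≤ q
        · have h3 := h p
          rwa [hval p (by omega), if_pos hpq, Fin.castSucc_le_castSucc_iff] at h3
        · have h3 := h (p + 1)
          rwa [hval (p + 1) (by omega), if_neg (by omega), if_neg (by omega),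
            show p + 1 - 1 = p from by omega, Fin.castSucc_le_castSucc_iff] at h3
      · intro h m
        have hmod : (t ^ (m % (r + 1))) j.castSucc = (t ^ m) j.castSucc := by
          have h2 : (⇑t)^[m % minimalPeriod (⇑t) j.castSucc] j.castSucc
              = (⇑t)^[m] j.castSucc := iterate_mod_minimalPeriod_eq
          rwa [hperiod, Equiv.Perm.iterate_eq_pow, Equiv.Perm.iterate_eq_pow] at h2
        rw [← hmod, hval (m % (r + 1)) (le_of_lt (Nat.mod_lt _ (Nat.succ_pos r)))]
        by_cases hpq : m % (r + 1) ≤ q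
        · rw [if_pos hpq]
          exact Fin.castSucc_le_castSucc_iff.mpr (h _)
        · rw [if_neg hpq]
          by_cases hpq2 : m % (r + 1) = q + 1
          · rw [if_pos hpq2]; exact Fin.le_last _
          · rw [if_neg hpq2]
            exact Fin.castSucc_le_castSucc_iff.mpr (h _)
    have hsbq : s b = (s ^ (q + 1)) j := by
      rw [pow_succ', Equiv.Perm.mul_apply, hq]
    have hcond : ∀ m < r, (q + 1 < r ∨ 1 ≤ m) → m ≠ q + 1 → s b ≠ (s ^ m) j := by
      intro m hm hor hne hcon
      rw [hsbq] at hcon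
      by_cases hq1 : q + 1 < r
      · exact hne (perm_pow_distinct s j hq1 hm hcon).symm
      · have hq1' : q + 1 = r := by omega
        have h0 : (s ^ m) j = (s ^ 0) j := by
          rw [← hcon, hq1', hsr, pow_zero]
          rfl
        have := perm_pow_distinct s j hm hr h0
        omega
    set F : ℕ → G := fun m => y.left ((t ^ m) j.castSucc) with hF
    set Wf : ℕ → G := fun m => w.left ((s ^ m) j) with hWf
    have hcp : cycleProd y j.castSucc = ((List.range (r + 1)).reverse.map F).prod := by
      unfold cycleProd
      rw [← ht, hperiod, ← hF]
    have hcw : cycleProd w j = ((List.range r).reverse.map Wf).prod := by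
      unfold cycleProd
      rw [← hs, ← hrdef, ← hWf]
    have hFWterm : ∀ m < r, m ≤ q → (q + 1 < r ∨ 1 ≤ m) → F m = Wf m := by
      intro m hm hmq hor
      simp only [hF, hWf]
      rw [hval m (by omega), if_pos hmq, hL, if_neg (hcond m hm hor (by omega)), mul_one]
    have hFq1 : F (q + 1) = g := by
      simp only [hF]
      rw [hval (q + 1) (by omega), if_neg (by omega), if_pos rfl, hLlast]
    have hprodiff : cycleProd y j.castSucc ∈ c ↔ cycleProd w j ∈ c := by
      by_cases hq1 : q + 1 < r
      · have heq : cycleProd y j.castSucc = cycleProd w j := by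
          rw [hcp, hcw, revProd_split F (q + 1) (r + 1) (by omega),
            revProd_split Wf (q + 1) r (by omega)]
          have hlow : ((List.range (q + 1)).reverse.map F).prod
              = ((List.range (q + 1)).reverse.map Wf).prod :=
            revProd_congr fun m hm => hFWterm m (by omega) (by omega) (Or.inl hq1)
          rw [hlow]
          congr 1
          rw [revProd_split (fun u => F (q + 1 + u)) 2 (r + 1 - (q + 1)) (by omega),
            revProd_split (fun u => Wf (q + 1 + u)) 1 (r - (q + 1)) (by omega)]
          have hhigh : ((List.range (r + 1 - (q + 1) - 2)).reverse.map
                fun v => F (q + 1 + (2 + v))).prod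
              = ((List.range (r - (q + 1) - 1)).reverse.map
                fun v => Wf (q + 1 + (1 + v))).prod := by
            rw [show r + 1 - (q + 1) - 2 = r - (q + 1) - 1 from by omega]
            refine revProd_congr fun v hv => ?_
            have hv' : v < r - q - 2 := by omega
            simp only [hF, hWf]
            rw [show q + 1 + (2 + v) = q + 2 + v + 1 from by omega,
              hval (q + 2 + v + 1) (by omega), if_neg (by omega), if_neg (by omega),
              show q + 2 + v + 1 - 1 = q + 1 + (1 + v) from by omega, hL,
              if_neg (hcond (q + 1 + (1 + v)) (by omega) (Or.inl hq1) (by omega)), mul_one]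
          rw [hhigh]
          congr 1
          have h2 : ((List.range 2).reverse.map fun u => F (q + 1 + u)).prod
              = F (q + 1 + 1) * F (q + 1 + 0) := by
            rw [show List.range 2 = [0, 1] from rfl]
            simp
          have h1 : ((List.range 1).reverse.map fun u => Wf (q + 1 + u)).prod
              = Wf (q + 1 + 0) := by
            rw [show List.range 1 = [0] from rfl]
            simp
          rw [h2, h1]
          have hFq2 : F (q + 1 + 1) = Wf (q + 1) * g⁻¹ := by
            simp only [hF, hWf]
            rw [hval (q + 1 + 1) (by omega), if_neg (by omega), if_neg (by omega),
              show q + 1 + 1 - 1 = q + 1 from by omega, hL, if_pos hsbq]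
          rw [hFq2, show q + 1 + 0 = q + 1 from rfl, hFq1]
          group
        rw [heq]
      · have hq1' : q + 1 = r := by omega
        have heq : cycleProd y j.castSucc = g * cycleProd w j * g⁻¹ := by
          rw [hcp, hcw, revProd_split F r (r + 1) (by omega),
            revProd_split F 1 r (by omega), revProd_split Wf 1 r (by omega)]
          have htop : ((List.range (r + 1 - r)).reverse.map fun u => F (r + u)).prod = g := by
            rw [show r + 1 - r = 1 from by omega, show List.range 1 = [0] from rfl]
            simp only [List.reverse_cons, List.reverse_nil, List.nil_append, List.map_cons,
              List.map_nil, List.prod_cons, List.prod_nil, mul_one, Nat.add_zero]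
            rw [← hq1']
            exact hFq1
          have hmid : ((List.range (r - 1)).reverse.map fun v => F (1 + v)).prod
              = ((List.range (r - 1)).reverse.map fun v => Wf (1 + v)).prod :=
            revProd_congr fun v hv =>
              hFWterm (1 + v) (by omega) (by omega) (Or.inr (by omega))
          have hbot : ((List.range 1).reverse.map F).prod = Wf 0 * g⁻¹ := by
            rw [show List.range 1 = [0] from rfl]
            simp only [List.reverse_cons, List.reverse_nil, List.nil_append, List.map_cons,
              List.map_nil, List.prod_cons, List.prod_nil, mul_one]
            simp only [hF, hWf]
            rw [hval 0 (by omega), if_pos (by omega), hL, if_pos]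
            rw [hsbq, hq1', hsr, pow_zero]
            rfl
          have hbot' : ((List.range 1).reverse.map Wf).prod = Wf 0 := by
            rw [show List.range 1 = [0] from rfl]
            simp
          rw [htop, hmid, hbot, hbot']
          group
        rw [heq]
        constructor
        · intro h
          exact hc _ _ (isConj_iff.mpr ⟨g⁻¹, by group⟩) h
        · intro h
          exact hc _ _ (isConj_iff.mpr ⟨g, rfl⟩) h
    rw [hmin]
    exact and_congr_right fun _ => hprodiff
  · -- b is not on the cycle of j
    have hA : ∀ m : ℕ, (t ^ m) j.castSucc = ((s ^ m) j).castSucc := by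
      intro m
      induction m with
      | zero => simp
      | succ m ih =>
        rw [pow_succ', pow_succ', Equiv.Perm.mul_apply, Equiv.Perm.mul_apply, ih,
          hT1 _ (fun hcon => hb ⟨m, hcon⟩)]
    have hsb : ∀ m : ℕ, s b ≠ (s ^ m) j := by
      intro m hcon
      apply hb
      refine ⟨m + r - 1, ?_⟩
      apply s.injective
      have h1 : s ((s ^ (m + r - 1)) j) = (s ^ (m + r)) j := by
        rw [← Equiv.Perm.mul_apply, ← pow_succ', show m + r - 1 + 1 = m + r from by omega]
      have h2 : (s ^ (m + r)) j = (s ^ m) j := by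
        rw [pow_add, Equiv.Perm.mul_apply, hsr]
      rw [h1, h2, ← hcon]
    have hper : minimalPeriod (⇑t) j.castSucc = r := by
      refine minimalPeriod_eq_of_iff fun m => ?_
      show (⇑t)^[m] j.castSucc = j.castSucc ↔ (⇑s)^[m] j = j
      rw [Equiv.Perm.iterate_eq_pow, Equiv.Perm.iterate_eq_pow, hA, Fin.castSucc_inj]
    have hprod : cycleProd y j.castSucc = cycleProd w j := by
      unfold cycleProd
      rw [← ht, ← hs, hper, ← hrdef]
      congr 1
      refine List.map_congr_left fun m _ => ?_
      rw [hA, hL, if_neg (hsb m), mul_one]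
    have hmin : (∀ m : ℕ, j.castSucc ≤ (t ^ m) j.castSucc) ↔ ∀ m : ℕ, j ≤ (s ^ m) j := by
      constructor
      · intro h m; have := h m; rwa [hA, Fin.castSucc_le_castSucc_iff] at this
      · intro h m; rw [hA, Fin.castSucc_le_castSucc_iff]; exact h m
    rw [hmin, hprod]

lemma wp_mul_left (u v : WP G n) (i : Fin n) :
    (u * v).left i = u.left i * v.left (u.right⁻¹ i) := rfl

lemma wp_mul_right (u v : WP G n) : (u * v).right = u.right * v.right := rfl

lemma emb_right (x : WP G n) : (emb (Nat.le_succ n) x).right = pext x.right := rfl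

lemma emb_left_castSucc (x : WP G n) (i : Fin n) :
    (emb (Nat.le_succ n) x).left i.castSucc = x.left i := by
  show (if hi : ((i.castSucc : Fin (n + 1)) : ℕ) < n then x.left ⟨_, hi⟩ else 1) = x.left i
  simp only [Fin.coe_castSucc]
  rw [dif_pos i.isLt]

lemma emb_left_last (x : WP G n) : (emb (Nat.le_succ n) x).left (Fin.last n) = 1 := by
  show (if hi : ((Fin.last n : Fin (n + 1)) : ℕ) < n then x.left ⟨_, hi⟩ else 1) = 1
  simp only [Fin.val_last]
  rw [dif_neg (lt_irrefl n)]

lemma pext_inv (x : Equiv.Perm (Fin n)) : (pext x)⁻¹ = pext x⁻¹ :=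
  Equiv.Perm.extendDomain_inv _ _

lemma emb_mul_ins (x w : WP G n) (g : G) (a : Fin (n + 1)) :
    emb (Nat.le_succ n) x * ins w g a = ins (x * w) g a := by
  refine SemidirectProduct.ext ?_ ?_
  · funext i
    rw [wp_mul_left]
    induction i using Fin.lastCases with
    | last =>
      rw [emb_left_last, one_mul, ins_left_last]
      have h1 : (emb (Nat.le_succ n) x).right⁻¹ (Fin.last n) = Fin.last n := by
        rw [emb_right, pext_inv, pext_last]
      rw [h1, ins_left_last]
    | cast i =>
      have h1 : (emb (Nat.le_succ n) x).right⁻¹ i.castSucc = (x.right⁻¹ i).castSucc := by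
        rw [emb_right, pext_inv, pext_castSucc]
      rw [h1, emb_left_castSucc, ins_left_castSucc, ins_left_castSucc, wp_mul_left]
      have hxi : pext x.right ((x.right⁻¹ i).castSucc) = i.castSucc := by
        rw [pext_castSucc, ← Equiv.Perm.mul_apply, mul_inv_cancel, Equiv.Perm.one_apply]
      have hiff : (pext (x * w).right a = i.castSucc)
          ↔ (pext w.right a = (x.right⁻¹ i).castSucc) := by
        rw [show (x * w).right = x.right * w.right from rfl, pext_mul, Equiv.Perm.mul_apply]
        constructor
        · intro h
          exact (pext x.right).injective (h.trans hxi.symm)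
        · intro h
          rw [h, hxi]
      rw [if_congr hiff rfl rfl, mul_assoc]
  · show (emb (Nat.le_succ n) x).right * (ins w g a).right = (ins (x * w) g a).right
    rw [emb_right, ins_right, ins_right, show (x * w).right = x.right * w.right from rfl,
      pext_mul, mul_assoc]

lemma ins_injective :
    Function.Injective fun p : WP G n × G × Fin (n + 1) => ins p.1 p.2.1 p.2.2 := by
  rintro ⟨w, g, a⟩ ⟨w', g', a'⟩ h
  simp only at h
  have hr : pext w.right * Equiv.swap a (Fin.last n)
      = pext w'.right * Equiv.swap a' (Fin.last n) := congrArg SemidirectProduct.right h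
  have hl := congrArg SemidirectProduct.left h
  have ha : a = a' := by
    have h1 : (pext w.right * Equiv.swap a (Fin.last n)) a = Fin.last n := by
      rw [Equiv.Perm.mul_apply, Equiv.swap_apply_left, pext_last]
    have h2 : (pext w.right * Equiv.swap a (Fin.last n)) a' = Fin.last n := by
      rw [hr, Equiv.Perm.mul_apply, Equiv.swap_apply_left, pext_last]
    exact (pext w.right * Equiv.swap a (Fin.last n)).injective (h1.trans h2.symm)
  subst ha
  have hsw : pext w.right = pext w'.right := mul_right_cancel hr
  have hwr : w.right = w'.right := by
    refine Equiv.ext fun i => Fin.castSucc_inj.mp ?_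
    rw [← pext_castSucc, hsw, pext_castSucc]
  have hg : g = g' := by
    have h3 := congrFun hl (Fin.last n)
    rwa [ins_left_last, ins_left_last] at h3
  subst hg
  have hwl : w.left = w'.left := by
    funext i
    have h4 := congrFun hl i.castSucc
    rw [ins_left_castSucc, ins_left_castSucc, hwr] at h4
    exact mul_right_cancel h4
  have hww : w = w' := SemidirectProduct.ext hwl hwr
  rw [hww]

lemma card_wp [Fintype G] (m : ℕ) :
    Fintype.card (WP G m) = Fintype.card G ^ m * Nat.factorial m := by
  classical
  rw [Fintype.card_congr (wpEquivProd G m), Fintype.card_prod, Fintype.card_fun,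
    Fintype.card_perm, Fintype.card_fin]

lemma ins_bijective [Fintype G] :
    Function.Bijective fun p : WP G n × G × Fin (n + 1) => ins p.1 p.2.1 p.2.2 := by
  classical
  rw [Fintype.bijective_iff_injective_and_card]
  refine ⟨ins_injective, ?_⟩
  simp only [Fintype.card_prod, card_wp, Fintype.card_fin]
  rw [Nat.factorial_succ]
  ring

end WP


open WP in
/-- The functions `χₙ` are consistent with the embeddings
`ι : G ≀ S(n) → G ≀ S(n+1)`, hence define the character `χ_{z₁,…,z_k}` on
`G ≀ S(∞)`. -/
theorem chiRes_consistent {G : Type*} [Group G] [Fintype G] {k : ℕ}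
    (z : Fin k → ℂ) (hz : ∀ l, z l ≠ 0) (c : Fin k → Set G)
    (hconj : ∀ l, IsConjClass (c l)) (hpart : ∀ g : G, ∃! l, g ∈ c l)
    (n : ℕ) (x : WP G n) :
    chiRes z c (n + 1) (emb (Nat.le_succ n) x) = chiRes z c n x := by
  classical
  have hcl : ∀ (l : Fin k) (u v : G), IsConj u v → u ∈ c l → v ∈ c l := by
    intro l u v huv hu
    obtain ⟨g₀, hg₀⟩ := hconj l
    rw [hg₀] at hu ⊢
    exact hu.trans huv
  set T : ℝ := ewensT (fun l => Complex.normSq (z l)) c with hTdef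
  have hcG : (0 : ℝ) < (Fintype.card G : ℝ) := by
    exact_mod_cast Fintype.card_pos
  have hTpos : 0 < T := by
    rw [hTdef, ewensT]
    refine Finset.sum_pos' (fun l _ => ?_) ?_
    · exact div_nonneg (mul_nonneg (Complex.normSq_nonneg _) (Nat.cast_nonneg _)) hcG.le
    · set l₀ : Fin k := (hpart 1).choose with hl₀
      refine ⟨l₀, Finset.mem_univ _, ?_⟩
      have h1 : (1 : G) ∈ c l₀ := (hpart 1).choose_spec.1
      haveI : Nonempty (c l₀) := ⟨⟨1, h1⟩⟩
      refine div_pos (mul_pos ?_ ?_) hcG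
      · exact Complex.normSq_pos.mpr (hz l₀)
      · exact_mod_cast Nat.card_pos
  have hPn : (0 : ℝ) < (ascPochhammer ℝ n).eval T := ascPochhammer_pos n T hTpos
  set base : WP G n → ℂ := fun v => ∏ l, z l ^ cycleCount (x * v) (c l)
      * (starRingEnd ℂ) (z l) ^ cycleCount v (c l) with hbase
  set u : G → ℂ := fun g => ∏ l, (z l * (starRingEnd ℂ) (z l)) ^ (if g ∈ c l then 1 else 0)
    with hud
  have hsum1 : ∀ (v : WP G n) (g : G),
      (∑ a : Fin (n + 1), ∏ l, z l ^ cycleCount (emb (Nat.le_succ n) x * ins v g a) (c l)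
        * (starRingEnd ℂ) (z l) ^ cycleCount (ins v g a) (c l))
      = (n : ℂ) * base v + base v * u g := by
    intro v g
    rw [Fin.sum_univ_castSucc]
    have hb : ∀ b : Fin n,
        (∏ l, z l ^ cycleCount (emb (Nat.le_succ n) x * ins v g b.castSucc) (c l)
          * (starRingEnd ℂ) (z l) ^ cycleCount (ins v g b.castSucc) (c l)) = base v := by
      intro b
      rw [emb_mul_ins]
      simp only [hbase]
      refine Finset.prod_congr rfl fun l _ => ?_
      rw [insB_count (x * v) g b (c l) (hcl l), insB_count v g b (c l) (hcl l)]
    have hlast : (∏ l, z l ^ cycleCount (emb (Nat.le_succ n) x * ins v g (Fin.last n)) (c l)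
        * (starRingEnd ℂ) (z l) ^ cycleCount (ins v g (Fin.last n)) (c l))
        = base v * u g := by
      rw [emb_mul_ins]
      simp only [hbase, hud]
      rw [← Finset.prod_mul_distrib]
      refine Finset.prod_congr rfl fun l _ => ?_
      rw [insA_count (x * v) g (c l), insA_count v g (c l), pow_add, pow_add, mul_pow]
      ring
    rw [hlast, Finset.sum_congr rfl fun b _ => hb b, Finset.sum_const, Finset.card_univ,
      Fintype.card_fin, nsmul_eq_mul]
  have hU : (∑ g : G, u g) = (Fintype.card G : ℂ) * (T : ℂ) := by
    have huv : ∀ g : G, u g = z ((hpart g).choose) * (starRingEnd ℂ) (z ((hpart g).choose)) := by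
      intro g
      simp only [hud]
      rw [Finset.prod_eq_single ((hpart g).choose)]
      · rw [if_pos (hpart g).choose_spec.1, pow_one]
      · intro l _ hlne
        rw [if_neg fun hgl => hlne ((hpart g).choose_spec.2 l hgl), pow_zero]
      · intro habs
        exact absurd (Finset.mem_univ _) habs
    calc (∑ g : G, u g)
        = ∑ g : G, (fun l => z l * (starRingEnd ℂ) (z l)) ((hpart g).choose) :=
          Finset.sum_congr rfl fun g _ => huv g
      _ = ∑ l, ∑ _g ∈ Finset.univ.filter fun g => (hpart g).choose = l,
            z l * (starRingEnd ℂ) (z l) :=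
          (Finset.sum_fiberwise' Finset.univ (fun g => (hpart g).choose)
            (fun l => z l * (starRingEnd ℂ) (z l))).symm
      _ = ∑ l, (Nat.card (c l) : ℂ) * (Complex.normSq (z l) : ℂ) := by
          refine Finset.sum_congr rfl fun l _ => ?_
          rw [Finset.sum_const, nsmul_eq_mul]
          have hfil : (Finset.univ.filter fun g => (hpart g).choose = l)
              = Finset.univ.filter fun g : G => g ∈ c l := by
            refine Finset.filter_congr fun g _ => ?_
            constructor
            · intro h; rw [← h]; exact (hpart g).choose_spec.1
            · intro h; exact ((hpart g).choose_spec.2 l h).symm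
          rw [hfil]
          have hcardc : (Finset.univ.filter fun g : G => g ∈ c l).card = Nat.card (c l) := by
            rw [Nat.card_eq_fintype_card, Fintype.card_subtype]
          rw [hcardc, Complex.mul_conj]
      _ = (Fintype.card G : ℂ) * (T : ℂ) := by
          have hne : (Fintype.card G : ℂ) ≠ 0 := by exact_mod_cast ne_of_gt hcG
          rw [hTdef, ewensT]
          push_cast
          rw [Finset.mul_sum]
          refine Finset.sum_congr rfl fun l _ => ?_
          field_simp
  have hbij := Fintype.sum_bijective
      (fun p : WP G n × G × Fin (n + 1) => ins p.1 p.2.1 p.2.2) ins_bijective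
      (fun p => ∏ l, z l ^ cycleCount (emb (Nat.le_succ n) x * ins p.1 p.2.1 p.2.2) (c l)
        * (starRingEnd ℂ) (z l) ^ cycleCount (ins p.1 p.2.1 p.2.2) (c l))
      (fun y => ∏ l, z l ^ cycleCount (emb (Nat.le_succ n) x * y) (c l)
        * (starRingEnd ℂ) (z l) ^ cycleCount y (c l))
      (fun p => rfl)
  have hsum : (∑ y : WP G (n + 1), ∏ l, z l ^ cycleCount (emb (Nat.le_succ n) x * y) (c l)
        * (starRingEnd ℂ) (z l) ^ cycleCount y (c l))
      = (Fintype.card G : ℂ) * ((n : ℂ) + (T : ℂ)) * ∑ v : WP G n, base v := by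
    rw [← hbij]
    simp only [Fintype.sum_prod_type]
    have hper : ∀ v : WP G n,
        (∑ g : G, ∑ a : Fin (n + 1), ∏ l,
            z l ^ cycleCount (emb (Nat.le_succ n) x * ins v g a) (c l)
            * (starRingEnd ℂ) (z l) ^ cycleCount (ins v g a) (c l))
        = (Fintype.card G : ℂ) * ((n : ℂ) + (T : ℂ)) * base v := by
      intro v
      rw [Finset.sum_congr rfl fun g _ => hsum1 v g, Finset.sum_add_distrib,
        Finset.sum_const, ← Finset.mul_sum, hU, Finset.card_univ, nsmul_eq_mul]
      ring
    rw [Finset.sum_congr rfl fun v _ => hper v, ← Finset.mul_sum]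
  unfold chiRes
  rw [hsum]
  simp only [hbase]
  rw [← hTdef, ascPochhammer_succ_eval]
  have hcGC : ((Fintype.card G : ℂ)) ≠ 0 := by
    exact_mod_cast ne_of_gt hcG
  have hPnC : ((((ascPochhammer ℝ n).eval T) : ℝ) : ℂ) ≠ 0 :=
    Complex.ofReal_ne_zero.mpr (ne_of_gt hPn)
  have hTnC : ((T : ℂ) + (n : ℂ)) ≠ 0 := by
    have h1 : ((T + n : ℝ) : ℂ) ≠ 0 := Complex.ofReal_ne_zero.mpr (by positivity)
    push_cast at h1
    exact h1
  push_cast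
  field_simp
  ring

end WreathPaper
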